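/- arXiv:1210.0274 — 4 statements merged into one kernel-verified Lean document; each statement's English description precedes it below -/
import Mathlib

section
/- 2*cos(3*pi/16) = sqrt(2 + sqrt(2 - sqrt(2))). -/
open Real

lemma aux_half (x : ℝ) (h : 0 ≤ Real.cos (x/2)) :
    2 * Real.cos (x/2) = Real.sqrt (2 + 2 * Real.cos x) := by
  have h2 : (2 * Real.cos (x/2))^2 = 2 + 2 * Real.cos x := by
    have := Real.cos_sq (x/2)
    rw [show 2*(x/2) = x by ring] at this
    nlinarith
  rw [← h2, Real.sqrt_sq (by linarith)]

theorem stmt4 : 2 * Real.cos (3 * π / 16) = Real.sqrt (2 + Real.sqrt (2 - Real.sqrt 2)) := by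
  have hpi := Real.pi_pos
  have hc34 : Real.cos (3*π/4) = -(Real.sqrt 2 / 2) := by
    have : (3*π/4 : ℝ) = π - π/4 := by ring
    rw [this, Real.cos_pi_sub, Real.cos_pi_div_four]
  have h38 : 0 ≤ Real.cos (3*π/8) := by
    apply Real.cos_nonneg_of_mem_Icc
    constructor <;> nlinarith
  have h316 : 0 ≤ Real.cos (3*π/16) := by
    apply Real.cos_nonneg_of_mem_Icc
    constructor <;> nlinarith
  have step1 : 2 * Real.cos (3*π/8) = Real.sqrt (2 - Real.sqrt 2) := by
    have := aux_half (3*π/4) (by rw [show (3*π/4)/2 = 3*π/8 by ring]; exact h38)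
    rw [show (3*π/4)/2 = 3*π/8 by ring] at this
    rw [this, hc34]; ring_nf
  have step2 := aux_half (3*π/8) (by rw [show (3*π/8)/2 = 3*π/16 by ring]; exact h316)
  rw [show (3*π/8)/2 = 3*π/16 by ring] at step2
  rw [show (3:ℝ)*π/16 = 3*π/16 by ring, step2, step1]
end

section
/- 2*cos(5*pi/16) = sqrt(2 - sqrt(2 - sqrt(2))). -/
open Real

lemma double_cos (θ : ℝ) (h : 0 ≤ Real.cos θ) :
    2 * Real.cos θ = Real.sqrt (2 + 2 * Real.cos (2 * θ)) := by
  have h2 : 2 + 2 * Real.cos (2 * θ) = (2 * Real.cos θ) ^ 2 := by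
    rw [Real.cos_two_mul]; ring
  rw [h2, Real.sqrt_sq (by linarith)]

theorem stmt5 : 2 * Real.cos (5 * π / 16) = Real.sqrt (2 - Real.sqrt (2 - Real.sqrt 2)) := by
  have hpi := Real.pi_pos
  have h38 : 0 ≤ Real.cos (3 * π / 8) := by
    apply Real.cos_nonneg_of_mem_Icc
    constructor <;> [linarith; linarith]
  have e1 : 2 * Real.cos (3 * π / 8) = Real.sqrt (2 - Real.sqrt 2) := by
    rw [double_cos _ h38]
    congr 1
    have : 2 * (3 * π / 8) = π - π / 4 := by ring
    rw [this, Real.cos_pi_sub, Real.cos_pi_div_four]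
    ring
  have h516 : 0 ≤ Real.cos (5 * π / 16) := by
    apply Real.cos_nonneg_of_mem_Icc
    constructor <;> [linarith; linarith]
  rw [double_cos _ h516]
  congr 1
  have : 2 * (5 * π / 16) = π - 3 * π / 8 := by ring
  rw [this, Real.cos_pi_sub]
  have := e1
  linarith
end

section
/- For n in [-2, 2] with n = 2*cos(theta), theta in [0, pi], the expression 2*sin((pi+theta)/4)*sqrt( sin((-5*pi+theta)/8) / sin((pi-5*theta)/8) ) equals sqrt( (2+sqrt(2-n)) / (1 + sqrt(2-n) - sqrt(2+sqrt(2-n))) ), whenever both sides are defined (the quotient of sines is nonnegative). -/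
open Real

lemma key (v : ℝ) : -(1 - 2*Real.cos (4*v) - 2*Real.sin (2*v)) * (Real.sin v + Real.cos v)
    = Real.cos (5*v) + Real.sin (5*v) := by
  have h4 : (4:ℝ)*v = 2*v + 2*v := by ring
  have h5 : (5:ℝ)*v = (2*v + 2*v) + v := by ring
  rw [h4, h5, Real.cos_add (2*v+2*v) v, Real.sin_add (2*v+2*v) v,
      Real.cos_add (2*v) (2*v), Real.sin_add (2*v) (2*v),
      Real.sin_two_mul, Real.cos_two_mul]
  linear_combination (-4*Real.sin v*Real.cos v^2 + 4*Real.cos v^3) * (Real.sin_sq_add_cos_sq v)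

theorem stmt12 (θ n : ℝ) (hθ0 : 0 ≤ θ) (hθπ : θ ≤ π) (hn : n = 2 * Real.cos θ)
    (hden : Real.sin ((π - 5 * θ) / 8) ≠ 0)
    (hquot : 0 ≤ Real.sin ((-5 * π + θ) / 8) / Real.sin ((π - 5 * θ) / 8)) :
    2 * Real.sin ((π + θ) / 4) *
        Real.sqrt (Real.sin ((-5 * π + θ) / 8) / Real.sin ((π - 5 * θ) / 8)) =
      Real.sqrt ((2 + Real.sqrt (2 - n)) /
        (1 + Real.sqrt (2 - n) - Real.sqrt (2 + Real.sqrt (2 - n)))) := by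
  have hπ := Real.pi_pos
  set v := (π + θ) / 8 with hv
  set s1 := Real.sin ((-5 * π + θ) / 8) with hs1def
  set s2 := Real.sin ((π - 5 * θ) / 8) with hs2def
  -- positivity / negativity facts
  have hT : 0 < Real.sin ((π + θ) / 4) :=
    Real.sin_pos_of_pos_of_lt_pi (by linarith) (by linarith)
  have hs1 : s1 < 0 := by
    rw [hs1def]
    exact Real.sin_neg_of_neg_of_neg_pi_lt (by linarith) (by linarith)
  have hs2 : s2 < 0 := by
    rcases hden.lt_or_gt with h | h
    · exact h
    · exact absurd hquot (not_le.mpr (div_neg_of_neg_of_pos hs1 h))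
  -- sqrt (2 - n) = 2 sin(θ/2)
  have hsinh : 0 ≤ Real.sin (θ/2) :=
    Real.sin_nonneg_of_nonneg_of_le_pi (by linarith) (by linarith)
  have h2n : 2 - n = (2 * Real.sin (θ/2))^2 := by
    have h := Real.cos_two_mul (θ/2)
    rw [show 2*(θ/2) = θ by ring] at h
    rw [hn]
    linear_combination -2*h - 4*(Real.sin_sq_add_cos_sq (θ/2))
  have hsub : Real.sqrt (2 - n) = 2 * Real.sin (θ/2) := by
    rw [h2n, Real.sqrt_sq (by linarith)]
  -- sqrt (2 + 2 sin(θ/2)) = 2 sin((π+θ)/4)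
  have h22 : 2 + 2 * Real.sin (θ/2) = (2 * Real.sin ((π + θ)/4))^2 := by
    have h := Real.cos_two_mul ((π + θ)/4)
    rw [show 2*((π+θ)/4) = π/2 + θ/2 by ring, Real.cos_add, Real.cos_pi_div_two,
      Real.sin_pi_div_two] at h
    linear_combination -2*h - 4*(Real.sin_sq_add_cos_sq ((π+θ)/4))
  have hT2 : Real.sqrt (2 + 2 * Real.sin (θ/2)) = 2 * Real.sin ((π + θ)/4) := by
    rw [h22, Real.sqrt_sq (by linarith)]
  -- the key trig identity: B * s1 = s2
  have hθ2 : Real.sin (θ/2) = -Real.cos (4*v) := by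
    rw [show θ/2 = 4*v - π/2 by rw [hv]; ring, Real.sin_sub_pi_div_two]
  have hs34 : Real.sin (3*π/4) = Real.sqrt 2 / 2 := by
    rw [show 3*π/4 = π - π/4 by ring, Real.sin_pi_sub, Real.sin_pi_div_four]
  have hc34 : Real.cos (3*π/4) = -(Real.sqrt 2 / 2) := by
    rw [show 3*π/4 = π - π/4 by ring, Real.cos_pi_sub, Real.cos_pi_div_four]
  have hB : (1 + 2 * Real.sin (θ/2) - 2 * Real.sin ((π + θ)/4)) * s1 = s2 := by
    rw [hs1def, hs2def, show (-5*π + θ)/8 = v - 3*π/4 by rw [hv]; ring,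
      show (π - 5*θ)/8 = 3*π/4 - 5*v by rw [hv]; ring,
      show (π + θ)/4 = 2*v by rw [hv]; ring, hθ2,
      Real.sin_sub, Real.sin_sub, hs34, hc34]
    linear_combination (Real.sqrt 2 / 2) * key v
  -- assemble
  have hs1ne : s1 ≠ 0 := ne_of_lt hs1
  have hs2ne : s2 ≠ 0 := hden
  have hBval : 1 + 2 * Real.sin (θ/2) - 2 * Real.sin ((π + θ)/4) = s2 / s1 :=
    (eq_div_iff hs1ne).mpr hB
  rw [hsub, hT2, h22, hBval,
    show (2 * Real.sin ((π + θ)/4))^2 / (s2 / s1) = (2 * Real.sin ((π + θ)/4))^2 * (s1 / s2) by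
      field_simp,
    Real.sqrt_mul (sq_nonneg _), Real.sqrt_sq (by linarith)]
end

section
/- Let f : ℝ → ℝ be finite, non-decreasing, and such that log f is convex as a function of log y (i.e., t ↦ log f(e^t) is convex) on (0,∞), with f(y) = f(1) for all 0 < y ≤ 1 and f(y) ≥ max(f(1), sqrt(y)) for all y > 0, where f(1) > 1. Then there exists a critical value y_c with 1 ≤ y_c ≤ f(1)^2 such that f(y) = f(1) for y ≤ y_c and f(y) > f(1) for y > y_c. -/
open Real Set

theorem stmt14 (f : ℝ → ℝ)
    (hmono : MonotoneOn f (Set.Ioi 0))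
    (hconv : ConvexOn ℝ Set.univ (fun t : ℝ => Real.log (f (Real.exp t))))
    (hflat : ∀ y : ℝ, 0 < y → y ≤ 1 → f y = f 1)
    (hlb : ∀ y : ℝ, 0 < y → max (f 1) (Real.sqrt y) ≤ f y)
    (hf1 : 1 < f 1) :
    ∃ yc : ℝ, 1 ≤ yc ∧ yc ≤ (f 1) ^ 2 ∧
      (∀ y : ℝ, 0 < y → y ≤ yc → f y = f 1) ∧
      (∀ y : ℝ, yc < y → f 1 < f y) := by
  have hf1pos : (0:ℝ) < f 1 := lt_trans one_pos hf1
  set S : Set ℝ := {y | 0 < y ∧ f y = f 1} with hS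
  have h1S : (1:ℝ) ∈ S := ⟨one_pos, rfl⟩
  have hbdd : ∀ y ∈ S, y ≤ (f 1) ^ 2 := by
    intro y hy
    by_contra h
    push_neg at h
    have hy0 : 0 < y := hy.1
    have : Real.sqrt ((f 1)^2) < Real.sqrt y :=
      Real.sqrt_lt_sqrt (by positivity) h
    rw [Real.sqrt_sq hf1pos.le] at this
    have hle : Real.sqrt y ≤ f y := le_trans (le_max_right _ _) (hlb y hy0)
    rw [hy.2] at hle
    linarith
  have hbddA : BddAbove S := ⟨(f 1)^2, fun y hy => hbdd y hy⟩
  set yc := sSup S with hyc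
  have hyc1 : (1:ℝ) ≤ yc := le_csSup hbddA h1S
  have hycpos : (0:ℝ) < yc := lt_of_lt_of_le one_pos hyc1
  have hycub : yc ≤ (f 1)^2 := csSup_le ⟨1, h1S⟩ hbdd
  -- values below yc
  have hlt : ∀ y : ℝ, 0 < y → y < yc → f y = f 1 := by
    intro y hy0 hylt
    obtain ⟨s, hsS, hys⟩ := exists_lt_of_lt_csSup ⟨1, h1S⟩ hylt
    have h1 : f y ≤ f s := hmono hy0 hsS.1 hys.le
    rw [hsS.2] at h1
    have h2 : f 1 ≤ f y := le_trans (le_max_left _ _) (hlb y hy0)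
    linarith
  -- continuity via convexity
  have hcont : Continuous (fun t : ℝ => Real.log (f (Real.exp t))) := by
    have := hconv.continuousOn isOpen_univ
    exact continuousOn_univ.mp this
  have hfyc : f yc = f 1 := by
    set g := fun t : ℝ => Real.log (f (Real.exp t)) with hg
    set T := Real.log yc with hT
    have hexpT : Real.exp T = yc := Real.exp_log hycpos
    have heq : ∀ t < T, g t = Real.log (f 1) := by
      intro t ht
      have : Real.exp t < yc := by
        rw [← hexpT]; exact Real.exp_lt_exp.mpr ht
      rw [hg]; simp only
      rw [hlt _ (Real.exp_pos t) this]
    have htends : Filter.Tendsto g (nhdsWithin T (Set.Iio T)) (nhds (g T)) :=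
      (hcont.tendsto T).mono_left nhdsWithin_le_nhds
    have heqf : g =ᶠ[nhdsWithin T (Set.Iio T)] (fun _ => Real.log (f 1)) := by
      filter_upwards [self_mem_nhdsWithin] with t ht
      exact heq t ht
    have htends2 : Filter.Tendsto (fun _ : ℝ => Real.log (f 1))
        (nhdsWithin T (Set.Iio T)) (nhds (g T)) :=
      htends.congr' heqf
    have : g T = Real.log (f 1) :=
      tendsto_nhds_unique htends2 tendsto_const_nhds
    have hgT : Real.log (f yc) = Real.log (f 1) := by
      rw [hg] at this; simpa [hexpT] using this
    have hfycpos : 0 < f yc :=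
      lt_of_lt_of_le hf1pos (le_trans (le_max_left _ _) (hlb yc hycpos))
    calc f yc = Real.exp (Real.log (f yc)) := (Real.exp_log hfycpos).symm
      _ = Real.exp (Real.log (f 1)) := by rw [hgT]
      _ = f 1 := Real.exp_log hf1pos
  refine ⟨yc, hyc1, hycub, ?_, ?_⟩
  · intro y hy0 hyle
    rcases lt_or_eq_of_le hyle with h | h
    · exact hlt y hy0 h
    · rw [h, hfyc]
  · intro y hy
    have hy0 : 0 < y := lt_trans hycpos hy
    have h2 : f 1 ≤ f y := le_trans (le_max_left _ _) (hlb y hy0)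
    rcases lt_or_eq_of_le h2 with h | h
    · exact h
    · exfalso
      have : y ∈ S := ⟨hy0, h.symm⟩
      exact absurd (le_csSup hbddA this) (not_le.mpr hy)
end
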